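/- arXiv:1501.07483 — 3 statements merged into one kernel-verified Lean document; each statement's English description precedes it below -/
import Mathlib

section
/- For all x > 1, the function f(x) = ((3/4)·x·√(x²−1) − (3/4)·arcosh(x))^(2/3) / (x² − 1) is strictly monotonically decreasing on (1, ∞). -/
noncomputable def arcosh (x : ℝ) : ℝ := Real.log (x + Real.sqrt (x ^ 2 - 1))

/-!
Substituting `x = cosh t` (so `√(x² - 1) = sinh t`, `arcosh x = t`) turns the function into
`((3/4) ψ t) ^ (2/3)` with `ψ t = (sinh t cosh t - t) / sinh³ t`, so it suffices that `ψ` is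
strictly decreasing for `t > 0`. The numerator of `ψ'` is, up to the factor `sinh² t`,
`3 t cosh t - sinh t (sinh² t + 3)`, which vanishes at `0` and has derivative
`-3 sinh t (sinh t cosh t - t) < 0`.
-/

open Real hiding arcosh
open Set

lemma arcosh_eq_real_arcosh : arcosh = Real.arcosh := rfl

lemma sinh_mul_cosh_sub_pos {t : ℝ} (ht : 0 < t) : 0 < sinh t * cosh t - t := by
  have h := self_lt_sinh_iff.mpr (mul_pos two_pos ht)
  rw [sinh_two_mul] at h
  linarith

lemma three_mul_mul_cosh_lt {t : ℝ} (ht : 0 < t) :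
    3 * t * cosh t < sinh t * (sinh t ^ 2 + 3) := by
  set k : ℝ → ℝ := fun s => sinh s * (sinh s ^ 2 + 3) - 3 * s * cosh s
  have hk : ∀ s, HasDerivAt k (3 * sinh s * (sinh s * cosh s - s)) s := by
    intro s
    have h := ((hasDerivAt_sinh s).fun_mul (((hasDerivAt_sinh s).fun_pow 2).add_const 3)).fun_sub
      (((hasDerivAt_id s).const_mul 3).fun_mul (hasDerivAt_cosh s))
    refine h.congr_deriv ?_
    simp only [id, Nat.cast_ofNat]
    ring
  have hmono : StrictMonoOn k (Ici 0) := by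
    refine strictMonoOn_of_deriv_pos (convex_Ici 0) (by fun_prop) fun s hs => ?_
    rw [interior_Ici] at hs
    rw [(hk s).deriv]
    exact mul_pos (mul_pos three_pos (sinh_pos_iff.mpr hs)) (sinh_mul_cosh_sub_pos hs)
  have h := hmono self_mem_Ici ht.le ht
  simp only [k, sinh_zero, cosh_zero] at h
  linarith

lemma strictAntiOn_sinh_mul_cosh_sub_div_sinh_pow_three :
    StrictAntiOn (fun t => (sinh t * cosh t - t) / sinh t ^ 3) (Ioi 0) := by
  have hderiv : ∀ t, 0 < t → HasDerivAt (fun t => (sinh t * cosh t - t) / sinh t ^ 3)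
      (sinh t ^ 2 * (3 * t * cosh t - sinh t * (sinh t ^ 2 + 3)) / (sinh t ^ 3) ^ 2) t := by
    intro t ht
    have h := (((hasDerivAt_sinh t).fun_mul (hasDerivAt_cosh t)).fun_sub (hasDerivAt_id t)).fun_div
      ((hasDerivAt_sinh t).fun_pow 3) (pow_pos (sinh_pos_iff.mpr ht) 3).ne'
    refine h.congr_deriv ?_
    simp only [id, Nat.cast_ofNat]
    linear_combination (-2 * sinh t ^ 3 : ℝ) * cosh_sq t / (sinh t ^ 3) ^ 2
  refine strictAntiOn_of_deriv_neg (convex_Ioi 0)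
    (fun t ht => (hderiv t ht).continuousAt.continuousWithinAt) fun t ht => ?_
  rw [interior_Ioi] at ht
  rw [(hderiv t ht).deriv]
  have hsinh := sinh_pos_iff.mpr ht
  exact div_neg_of_neg_of_pos
    (mul_neg_of_pos_of_neg (by positivity) (sub_neg.mpr (three_mul_mul_cosh_lt ht)))
    (by positivity)

lemma zeta_div_sq_sub_one_eq_rpow {x : ℝ} (hx : 1 < x) :
    ((3 / 4) * x * √(x ^ 2 - 1) - (3 / 4) * arcosh x) ^ ((2 : ℝ) / 3) / (x ^ 2 - 1) =
      ((3 / 4) * ((sinh (Real.arcosh x) * cosh (Real.arcosh x) - Real.arcosh x) /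
        sinh (Real.arcosh x) ^ 3)) ^ ((2 : ℝ) / 3) := by
  have ht := arcosh_pos hx
  have hA := sinh_mul_cosh_sub_pos ht
  have hs := sinh_pos_iff.mpr ht
  have hs3 : (sinh (Real.arcosh x) ^ 3) ^ ((2 : ℝ) / 3) = x ^ 2 - 1 := by
    rw [← rpow_natCast, ← rpow_mul hs.le, sinh_arcosh hx.le]
    norm_num [sq_sqrt (by nlinarith : (0 : ℝ) ≤ x ^ 2 - 1)]
  rw [← mul_div_assoc, div_rpow (by positivity) (by positivity), hs3, cosh_arcosh hx.le,
    sinh_arcosh hx.le, arcosh_eq_real_arcosh]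
  congr 2
  ring

theorem stmt_0 :
    StrictAntiOn
      (fun x : ℝ =>
        ((3 / 4) * x * Real.sqrt (x ^ 2 - 1) - (3 / 4) * arcosh x) ^ ((2 : ℝ) / 3) /
          (x ^ 2 - 1))
      (Set.Ioi 1) := by
  intro a ha b hb hab
  simp only [zeta_div_sq_sub_one_eq_rpow ha, zeta_div_sq_sub_one_eq_rpow hb]
  have hta := arcosh_pos ha
  have htb := arcosh_pos hb
  have hAb := sinh_mul_cosh_sub_pos htb
  have hsb := sinh_pos_iff.mpr htb
  have htab : Real.arcosh a < Real.arcosh b :=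
    (arcosh_lt_arcosh (zero_lt_one.trans ha) (zero_lt_one.trans hb)).mpr hab
  refine rpow_lt_rpow (by positivity) ?_ (by norm_num)
  exact mul_lt_mul_of_pos_left
    (strictAntiOn_sinh_mul_cosh_sub_div_sinh_pow_three hta htb htab) (by norm_num)
end

section
/- For all x > 1, 0 < f(x) ≤ 2^(−2/3), where f(x) = ((3/4)·x·√(x²−1) − (3/4)·arcosh(x))^(2/3) / (x² − 1). -/
/-!
Put `x = cosh u` with `u > 0`: then `√(x² - 1) = sinh u`, `arcosh x = u`, and the bracket becomes
`(3/4) (sinh u cosh u - u)`. It is positive because `2 sinh u cosh u = sinh 2u > 2u`. The function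
`(2/3) sinh³ u - sinh u cosh u + u` vanishes at `0` and has derivative
`2 sinh² u (cosh u - 1) ≥ 0`, so the bracket is at most `(1/2) sinh³ u`, whose `2/3`-th power
is `2^(-2/3) sinh² u`.
-/

namespace Real

lemma self_lt_sinh_mul_cosh {u : ℝ} (hu : 0 < u) : u < sinh u * cosh u := by
  have h := self_lt_sinh_iff.2 (mul_pos two_pos hu)
  rw [sinh_two_mul] at h
  linarith

lemma sinh_mul_cosh_sub_self_le {u : ℝ} (hu : 0 ≤ u) :
    sinh u * cosh u - u ≤ 2 / 3 * sinh u ^ 3 := by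
  let h : ℝ → ℝ := fun v => 2 / 3 * sinh v ^ 3 - sinh v * cosh v + v
  have hderiv (v : ℝ) : HasDerivAt h (2 * sinh v ^ 2 * (cosh v - 1)) v := by
    have := ((((hasDerivAt_sinh v).pow 3).const_mul (2 / 3)).sub
      ((hasDerivAt_sinh v).mul (hasDerivAt_cosh v))).add (hasDerivAt_id v)
    refine this.congr_deriv ?_
    push_cast
    linear_combination (-1 : ℝ) * cosh_sq v
  have hmono : Monotone h := monotone_of_hasDerivAt_nonneg hderiv fun v =>
    mul_nonneg (by positivity) (sub_nonneg.2 (one_le_cosh v))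
  have h_zero_le := hmono hu
  simp only [h, sinh_zero, cosh_zero] at h_zero_le
  linarith

lemma sqrt_cosh_sq_sub_one {u : ℝ} (hu : 0 ≤ u) : √(cosh u ^ 2 - 1) = sinh u := by
  rw [cosh_sq, add_sub_cancel_right, sqrt_sq (sinh_nonneg_iff.2 hu)]

lemma half_mul_pow_three_rpow_two_thirds {s : ℝ} (hs : 0 ≤ s) :
    (1 / 2 * s ^ 3) ^ ((2 : ℝ) / 3) = 2 ^ (-(2 : ℝ) / 3) * s ^ 2 := by
  rw [mul_rpow (by norm_num) (by positivity), one_div, inv_rpow zero_le_two,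
    ← rpow_neg zero_le_two, ← rpow_natCast, ← rpow_mul hs, neg_div]
  norm_num

end Real

theorem stmt_3 (x : ℝ) (hx : 1 < x) :
    0 < ((3 / 4) * x * Real.sqrt (x ^ 2 - 1) - (3 / 4) * arcosh x) ^ ((2 : ℝ) / 3) /
          (x ^ 2 - 1) ∧
      ((3 / 4) * x * Real.sqrt (x ^ 2 - 1) - (3 / 4) * arcosh x) ^ ((2 : ℝ) / 3) /
          (x ^ 2 - 1) ≤ (2 : ℝ) ^ (-(2 : ℝ) / 3) := by
  obtain ⟨u, hu, rfl⟩ : ∃ u, 0 < u ∧ Real.cosh u = x :=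
    ⟨Real.arcosh x, Real.arcosh_pos hx, Real.cosh_arcosh hx.le⟩
  -- `arcosh` is definitionally Mathlib's `Real.arcosh`
  have harcosh : arcosh (Real.cosh u) = u := Real.arcosh_cosh hu.le
  have hsinh : 0 < Real.sinh u := Real.sinh_pos_iff.2 hu
  rw [harcosh, Real.sqrt_cosh_sq_sub_one hu.le, Real.cosh_sq, add_sub_cancel_right]
  have hpos : 0 < 3 / 4 * Real.cosh u * Real.sinh u - 3 / 4 * u := by
    linarith [Real.self_lt_sinh_mul_cosh hu]
  have hle : 3 / 4 * Real.cosh u * Real.sinh u - 3 / 4 * u ≤ 1 / 2 * Real.sinh u ^ 3 := by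
    linarith [Real.sinh_mul_cosh_sub_self_le hu.le]
  refine ⟨by positivity, ?_⟩
  rw [div_le_iff₀ (by positivity), ← Real.half_mul_pow_three_rpow_two_thirds hsinh.le]
  exact Real.rpow_le_rpow hpos.le hle (by norm_num)
end

section
/- For 0 < s < π/2, the function z(s) = (sec s · tan s − log(sec s + tan s)) / tan³ s satisfies z'(s) < 0, i.e. z is strictly decreasing on (0, π/2). -/
/-!
Write `z = zNum / tan³`. Since `zNum' = 2 sec·tan²` and `zNum 0 = 0`, `zNum > 0` on `(0, π/2)`.
The quotient rule gives `z' = −sec·zGap / tan⁴` with `zGap = 3 sec·zNum − 2 tan³`, and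
`zGap 0 = 0`, `zGap' = 3 sec·tan·zNum > 0`, so `zGap > 0` and `z' < 0`.
-/

noncomputable def z (s : ℝ) : ℝ :=
  ((1 / Real.cos s) * Real.tan s - Real.log (1 / Real.cos s + Real.tan s)) / (Real.tan s) ^ 3

open Real Set

lemma pos_of_hasDerivAt_pos_of_eq_zero {f f' : ℝ → ℝ} {a b x : ℝ}
    (hf : ∀ y ∈ Ico a b, HasDerivAt f (f' y) y) (hf' : ∀ y ∈ Ioo a b, 0 < f' y) (ha : f a = 0)
    (hx : x ∈ Ioo a b) : 0 < f x := by
  have hmono : StrictMonoOn f (Ico a b) :=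
    strictMonoOn_of_hasDerivWithinAt_pos (convex_Ico a b)
      (fun y hy ↦ (hf y hy).continuousAt.continuousWithinAt)
      (fun y hy ↦ by
        rw [interior_Ico] at hy ⊢
        exact (hf y (Ioo_subset_Ico_self hy)).hasDerivWithinAt)
      (fun y hy ↦ hf' y (by rwa [interior_Ico] at hy))
  simpa [ha] using hmono (left_mem_Ico.2 (hx.1.trans hx.2)) (Ioo_subset_Ico_self hx) hx.1

lemma cos_pos_of_mem_Ico {s : ℝ} (hs : s ∈ Ico 0 (π / 2)) : 0 < cos s :=
  cos_pos_of_mem_Ioo ⟨by linarith [pi_pos, hs.1], hs.2⟩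

lemma hasDerivAt_one_div_cos {s : ℝ} (hc : cos s ≠ 0) :
    HasDerivAt (fun x ↦ 1 / cos x) (sin s / cos s ^ 2) s :=
  ((hasDerivAt_const s 1).div (hasDerivAt_cos s) hc).congr_deriv (by ring)

noncomputable def zNum (s : ℝ) : ℝ :=
  1 / cos s * tan s - log (1 / cos s + tan s)

noncomputable def zGap (s : ℝ) : ℝ :=
  3 * (1 / cos s) * zNum s - 2 * tan s ^ 3

lemma hasDerivAt_zNum {s : ℝ} (hc : 0 < cos s) :
    HasDerivAt zNum (2 * (1 / cos s) * tan s ^ 2) s := by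
  have h_one_add_sin : 0 < 1 + sin s := by
    nlinarith [sin_sq_add_cos_sq s, neg_one_le_sin s, sin_le_one s]
  have hlog_arg : 1 / cos s + tan s ≠ 0 := by
    rw [tan_eq_sin_div_cos, ← add_div]
    positivity
  have hsec := hasDerivAt_one_div_cos hc.ne'
  have htan := hasDerivAt_tan hc.ne'
  refine ((hsec.mul htan).sub ((hsec.add htan).log hlog_arg)).congr_deriv ?_
  simp only [Pi.add_apply]
  rw [tan_eq_sin_div_cos]
  field_simp
  linear_combination -(1 + sin s) * sin_sq_add_cos_sq s

lemma zNum_pos {s : ℝ} (hs : s ∈ Ioo 0 (π / 2)) : 0 < zNum s :=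
  pos_of_hasDerivAt_pos_of_eq_zero (fun y hy ↦ hasDerivAt_zNum (cos_pos_of_mem_Ico hy))
    (fun y hy ↦ by
      have := cos_pos_of_mem_Ico (Ioo_subset_Ico_self hy)
      have := tan_pos_of_pos_of_lt_pi_div_two hy.1 hy.2
      positivity)
    (by simp [zNum]) hs

lemma hasDerivAt_zGap {s : ℝ} (hc : 0 < cos s) :
    HasDerivAt zGap (3 * (1 / cos s) * tan s * zNum s) s := by
  have hsec := hasDerivAt_one_div_cos hc.ne'
  have htan := hasDerivAt_tan hc.ne'
  refine (((hsec.const_mul 3).mul (hasDerivAt_zNum hc)).sub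
    ((htan.pow 3).const_mul 2)).congr_deriv ?_
  have := hc.ne'
  simp only [tan_eq_sin_div_cos, div_pow]
  field_simp
  ring

lemma hasDerivAt_z {s : ℝ} (hc : 0 < cos s) (ht : tan s ≠ 0) :
    HasDerivAt z (-(1 / cos s) * zGap s / tan s ^ 4) s := by
  refine ((hasDerivAt_zNum hc).div ((hasDerivAt_tan hc.ne').pow 3) (pow_ne_zero 3 ht)).congr_deriv ?_
  simp only [Pi.pow_apply, zGap]
  field_simp
  ring

lemma zGap_pos {s : ℝ} (hs : s ∈ Ioo 0 (π / 2)) : 0 < zGap s :=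
  pos_of_hasDerivAt_pos_of_eq_zero (fun y hy ↦ hasDerivAt_zGap (cos_pos_of_mem_Ico hy))
    (fun y hy ↦ by
      have := cos_pos_of_mem_Ico (Ioo_subset_Ico_self hy)
      have := tan_pos_of_pos_of_lt_pi_div_two hy.1 hy.2
      have := zNum_pos hy
      positivity)
    (by simp [zGap, zNum]) hs

lemma deriv_z_neg {s : ℝ} (hs : s ∈ Ioo 0 (π / 2)) : deriv z s < 0 := by
  have hc := cos_pos_of_mem_Ico (Ioo_subset_Ico_self hs)
  have ht := tan_pos_of_pos_of_lt_pi_div_two hs.1 hs.2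
  rw [(hasDerivAt_z hc ht.ne').deriv, neg_mul, neg_div, neg_neg_iff_pos]
  have := zGap_pos hs
  positivity

theorem stmt_4 :
    (∀ s ∈ Set.Ioo (0 : ℝ) (Real.pi / 2), deriv z s < 0) ∧
      StrictAntiOn z (Set.Ioo (0 : ℝ) (Real.pi / 2)) := by
  refine ⟨fun s hs ↦ deriv_z_neg hs, strictAntiOn_of_deriv_neg (convex_Ioo _ _) ?_ ?_⟩
  · exact fun s hs ↦
      (differentiableAt_of_deriv_ne_zero (deriv_z_neg hs).ne).continuousAt.continuousWithinAt
  · rw [interior_Ioo]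
    exact fun s hs ↦ deriv_z_neg hs
end
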